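/- With the Itzykson-Zuber variables I_0, I_1, I_2, ..., for every k ≥ 0 the vector field ∂/∂t_k expressed in the I-coordinates equals (1/(1-I_1))(I_0^k/k!) ∂/∂I_0 + (I_0^k/k!) ∑_{l≥1} (I_{l+1}/(1-I_1)) ∂/∂I_l + ∑_{1≤l≤k} (I_0^{k-l}/(k-l)!) ∂/∂I_l. Equivalently, for any formal power series G in the variables I_0, I_1, ..., one has ∂G/∂t_k = (1/(1-I_1))(I_0^k/k!) ∂G/∂I_0 + (I_0^k/k!) ∑_{l≥1}(I_{l+1}/(1-I_1)) ∂G/∂I_l + ∑_{l=1}^{k} (I_0^{k-l}/(k-l)!) ∂G/∂I_l. -/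

import Mathlib

open scoped Nat

noncomputable section

/-- The product (coefficientwise) topology on the big phase space ring `ℚ[[t₀, t₁, …]]`. -/
instance : TopologicalSpace (MvPowerSeries ℕ ℚ) :=
  @Pi.topologicalSpace (ℕ →₀ ℕ) (fun _ => ℚ) (fun _ => inferInstance)

/-- The formal partial derivative `∂/∂t_i` on `ℚ[[t₀, t₁, …]]` (with `t_n = X n`). -/
def pd (i : ℕ) (f : MvPowerSeries ℕ ℚ) : MvPowerSeries ℕ ℚ :=
  fun s => ((s i : ℚ) + 1) * MvPowerSeries.coeff (s + Finsupp.single i 1) f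

open Finset MvPowerSeries

instance : T2Space (MvPowerSeries ℕ ℚ) := inferInstanceAs (T2Space ((ℕ →₀ ℕ) → ℚ))
instance : ContinuousAdd (MvPowerSeries ℕ ℚ) := inferInstanceAs (ContinuousAdd ((ℕ →₀ ℕ) → ℚ))

theorem hasSum_coord {f : ℕ → MvPowerSeries ℕ ℚ} {a : MvPowerSeries ℕ ℚ} (h : HasSum f a)
    (s : ℕ →₀ ℕ) : HasSum (fun n => MvPowerSeries.coeff s (f n)) (MvPowerSeries.coeff s a) :=
  Pi.hasSum.mp h s
theorem hasSum_of_coord {f : ℕ → MvPowerSeries ℕ ℚ} {a : MvPowerSeries ℕ ℚ}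
    (h : ∀ s, HasSum (fun n => MvPowerSeries.coeff s (f n)) (MvPowerSeries.coeff s a)) :
    HasSum f a := Pi.hasSum.mpr h

theorem coeff_pd (i : ℕ) (f : MvPowerSeries ℕ ℚ) (s : ℕ →₀ ℕ) :
    coeff s (pd i f) = ((s i : ℚ) + 1) * coeff (s + Finsupp.single i 1) f := rfl

theorem sum_shift_left (i : ℕ) (s : ℕ →₀ ℕ) (u v : (ℕ →₀ ℕ) → ℚ) :
    ∑ p ∈ (antidiagonal (s + Finsupp.single i 1) : Finset ((ℕ→₀ℕ)×(ℕ→₀ℕ))), (p.1 i : ℚ) * u p.1 * v p.2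
    = ∑ p ∈ (antidiagonal s : Finset ((ℕ→₀ℕ)×(ℕ→₀ℕ))),
        ((p.1 i : ℚ) + 1) * u (p.1 + Finsupp.single i 1) * v p.2 := by
  set e := Finsupp.single i 1 with he
  have h1 : ∑ p ∈ antidiagonal (s + e), (p.1 i : ℚ) * u p.1 * v p.2
      = ∑ p ∈ (antidiagonal s).image
          (fun p : (ℕ→₀ℕ)×(ℕ→₀ℕ) => (p.1 + e, p.2)),
        (p.1 i : ℚ) * u p.1 * v p.2 := by
    refine (Finset.sum_subset ?_ ?_).symm
    · intro p hp
      simp only [Finset.mem_image] at hp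
      obtain ⟨q, hq, rfl⟩ := hp
      rw [Finset.HasAntidiagonal.mem_antidiagonal] at hq ⊢
      rw [← hq]; exact add_right_comm _ _ _
    · intro p hp hpim
      rw [Finset.HasAntidiagonal.mem_antidiagonal] at hp
      by_contra hne
      apply hpim
      have h1i : 1 ≤ p.1 i := by
        by_contra h
        push_neg at h
        interval_cases h' : p.1 i <;> simp_all
      have hle : e ≤ p.1 := by rw [he]; exact Finsupp.single_le_iff.mpr h1i
      refine Finset.mem_image.mpr ⟨(p.1 - e, p.2), ?_, ?_⟩
      · rw [Finset.HasAntidiagonal.mem_antidiagonal]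
        have h0 : p.1 - e + e + p.2 = s + e := by rw [tsub_add_cancel_of_le hle]; exact hp
        have h2 : p.1 - e + p.2 + e = s + e := by rw [← h0]; exact add_right_comm _ _ _
        exact add_right_cancel h2
      · simp [tsub_add_cancel_of_le hle]
  rw [h1, Finset.sum_image]
  · apply Finset.sum_congr rfl
    intro p _
    have hpe : (p.1 + e) i = p.1 i + 1 := by simp [he, Finsupp.add_apply]
    rw [hpe]; push_cast; ring
  · intro p _ q _ h
    simp only [Prod.mk.injEq] at h
    exact Prod.ext (add_right_cancel h.1) h.2

theorem sum_shift_right (i : ℕ) (s : ℕ →₀ ℕ) (u v : (ℕ →₀ ℕ) → ℚ) :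
    ∑ p ∈ (antidiagonal (s + Finsupp.single i 1) : Finset ((ℕ→₀ℕ)×(ℕ→₀ℕ))), (p.2 i : ℚ) * u p.1 * v p.2
    = ∑ p ∈ (antidiagonal s : Finset ((ℕ→₀ℕ)×(ℕ→₀ℕ))),
        ((p.2 i : ℚ) + 1) * u p.1 * v (p.2 + Finsupp.single i 1) := by
  set e := Finsupp.single i 1 with he
  have h1 : ∑ p ∈ antidiagonal (s + e), (p.2 i : ℚ) * u p.1 * v p.2
      = ∑ p ∈ (antidiagonal s).image
          (fun p : (ℕ→₀ℕ)×(ℕ→₀ℕ) => (p.1, p.2 + e)),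
        (p.2 i : ℚ) * u p.1 * v p.2 := by
    refine (Finset.sum_subset ?_ ?_).symm
    · intro p hp
      simp only [Finset.mem_image] at hp
      obtain ⟨q, hq, rfl⟩ := hp
      rw [Finset.HasAntidiagonal.mem_antidiagonal] at hq ⊢
      rw [← hq]; abel
    · intro p hp hpim
      rw [Finset.HasAntidiagonal.mem_antidiagonal] at hp
      by_contra hne
      apply hpim
      have h1i : 1 ≤ p.2 i := by
        by_contra h
        push_neg at h
        interval_cases h' : p.2 i <;> simp_all
      have hle : e ≤ p.2 := by rw [he]; exact Finsupp.single_le_iff.mpr h1i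
      refine Finset.mem_image.mpr ⟨(p.1, p.2 - e), ?_, ?_⟩
      · rw [Finset.HasAntidiagonal.mem_antidiagonal]
        have h0 : p.1 + (p.2 - e + e) = s + e := by rw [tsub_add_cancel_of_le hle]; exact hp
        have h2 : p.1 + (p.2 - e) + e = s + e := by rw [← h0]; exact add_assoc _ _ _
        exact add_right_cancel h2
      · simp [tsub_add_cancel_of_le hle]
  rw [h1, Finset.sum_image]
  · apply Finset.sum_congr rfl
    intro p _
    have hpe : (p.2 + e) i = p.2 i + 1 := by simp [he, Finsupp.add_apply]
    rw [hpe]; push_cast; ring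
  · intro p _ q _ h
    simp only [Prod.mk.injEq] at h
    exact Prod.ext h.1 (add_right_cancel h.2)

theorem pd_mul (i : ℕ) (f g : MvPowerSeries ℕ ℚ) :
    pd i (f * g) = pd i f * g + f * pd i g := by
  ext s
  change coeff s _ = coeff s _
  rw [coeff_pd, MvPowerSeries.coeff_mul, map_add, MvPowerSeries.coeff_mul,
    MvPowerSeries.coeff_mul, Finset.mul_sum]
  have key : ∀ p : (ℕ→₀ℕ)×(ℕ→₀ℕ), p ∈ antidiagonal (s + Finsupp.single i 1) →
      ((s i : ℚ) + 1) * (coeff p.1 f * coeff p.2 g)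
      = (p.1 i : ℚ) * coeff p.1 f * coeff p.2 g
        + (p.2 i : ℚ) * coeff p.1 f * coeff p.2 g := by
    intro p hp
    rw [Finset.HasAntidiagonal.mem_antidiagonal] at hp
    have h1 : p.1 i + p.2 i = s i + 1 := by
      have := DFunLike.congr_fun hp i
      simpa [Finsupp.add_apply, Finsupp.single_apply] using this
    have hc : (p.1 i : ℚ) + (p.2 i : ℚ) = (s i : ℚ) + 1 := by exact_mod_cast h1
    rw [← hc]; ring
  rw [Finset.sum_congr rfl key, Finset.sum_add_distrib,
    sum_shift_left i s (fun w => coeff w f) (fun w => coeff w g),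
    sum_shift_right i s (fun w => coeff w f) (fun w => coeff w g)]
  have e1 : ∀ p : (ℕ→₀ℕ)×(ℕ→₀ℕ), p ∈ antidiagonal s →
      ((p.1 i : ℚ) + 1) * coeff (p.1 + Finsupp.single i 1) f * coeff p.2 g
      = coeff p.1 (pd i f) * coeff p.2 g := by
    intro p _; rw [coeff_pd]
  have e2 : ∀ p : (ℕ→₀ℕ)×(ℕ→₀ℕ), p ∈ antidiagonal s →
      ((p.2 i : ℚ) + 1) * coeff p.1 f * coeff (p.2 + Finsupp.single i 1) g
      = coeff p.1 f * coeff p.2 (pd i g) := by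
    intro p _; rw [coeff_pd]; ring
  rw [Finset.sum_congr rfl e1, Finset.sum_congr rfl e2]

theorem pd_smul (i : ℕ) (c : ℚ) (f : MvPowerSeries ℕ ℚ) : pd i (c • f) = c • pd i f := by
  ext s
  change coeff s _ = coeff s _
  rw [coeff_pd, MvPowerSeries.coeff_smul, MvPowerSeries.coeff_smul, coeff_pd]
  ring

theorem pd_one (i : ℕ) : pd i (1 : MvPowerSeries ℕ ℚ) = 0 := by
  ext s
  change coeff s _ = coeff s _
  rw [coeff_pd, MvPowerSeries.coeff_one, map_zero]
  have h : s + Finsupp.single i 1 ≠ 0 := by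
    intro h
    have := DFunLike.congr_fun h i
    simp [Finsupp.add_apply, Finsupp.single_apply] at this
  rw [if_neg h, mul_zero]

theorem pd_X_self (i : ℕ) : pd i (MvPowerSeries.X i : MvPowerSeries ℕ ℚ) = 1 := by
  ext s
  change coeff s _ = coeff s _
  rw [coeff_pd, MvPowerSeries.coeff_X, MvPowerSeries.coeff_one]
  by_cases hs : s = 0
  · subst hs; simp
  · rw [if_neg hs, if_neg fun h => hs (by rwa [add_eq_right] at h), mul_zero]

theorem pd_X_ne {n i : ℕ} (h : n ≠ i) : pd i (MvPowerSeries.X n : MvPowerSeries ℕ ℚ) = 0 := by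
  ext s
  change coeff s _ = coeff s _
  rw [coeff_pd, MvPowerSeries.coeff_X, map_zero]
  rw [if_neg, mul_zero]
  intro hsum
  have := DFunLike.congr_fun hsum i
  simp [Finsupp.add_apply, Finsupp.single_apply, h] at this

theorem pd_pow (i : ℕ) (f : MvPowerSeries ℕ ℚ) :
    ∀ n : ℕ, pd i (f ^ (n + 1)) = ((n : ℚ) + 1) • (f ^ n * pd i f) := by
  intro n
  induction n with
  | zero => simp
  | succ n ih =>
    rw [pow_succ, pd_mul, ih, smul_mul_assoc]
    have h1 : f ^ n * pd i f * f = f ^ (n + 1) * pd i f := by ring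
    rw [h1, Nat.cast_add, Nat.cast_one, add_smul ((n : ℚ) + 1) 1, one_smul]

theorem hasSum_pd (i : ℕ) {f : ℕ → MvPowerSeries ℕ ℚ} {a : MvPowerSeries ℕ ℚ}
    (h : HasSum f a) : HasSum (fun n => pd i (f n)) (pd i a) := by
  apply hasSum_of_coord
  intro s
  simp only [coeff_pd]
  exact (hasSum_coord h (s + Finsupp.single i 1)).mul_left _

theorem hasSum_mul_right {f : ℕ → MvPowerSeries ℕ ℚ} {a : MvPowerSeries ℕ ℚ}
    (F : MvPowerSeries ℕ ℚ) (h : HasSum f a) : HasSum (fun n => f n * F) (a * F) := by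
  apply hasSum_of_coord
  intro s
  simp only [MvPowerSeries.coeff_mul]
  exact hasSum_sum fun p _ => (hasSum_coord h p.1).mul_right _

theorem fact_inv_succ (p : ℕ) : (((p + 1)! : ℚ))⁻¹ * ((p : ℚ) + 1) = ((p ! : ℚ))⁻¹ := by
  have h0 : (((p + 1)! : ℚ)) = ((p : ℚ) + 1) * (p ! : ℚ) := by
    rw [Nat.factorial_succ]; push_cast; ring
  have hp1 : ((p : ℚ) + 1) ≠ 0 := by positivity
  have hpf : (p ! : ℚ) ≠ 0 := Nat.cast_ne_zero.mpr p.factorial_ne_zero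
  rw [h0]
  field_simp

/-- With the Itzykson–Zuber variables `I₀, I₁, I₂, …`, the vector field `∂/∂t_k` in the
`I`-coordinates equals
`(1/(1-I₁))(I₀^k/k!) ∂/∂I₀ + (I₀^k/k!) ∑_{l≥1} (I_{l+1}/(1-I₁)) ∂/∂I_l
  + ∑_{1≤l≤k} (I₀^{k-l}/(k-l)!) ∂/∂I_l`,
expressed by its action on each coordinate `I₀, I_l`. -/
theorem vector_field_tk_in_I_coordinates (I : ℕ → MvPowerSeries ℕ ℚ)
    (h0 : MvPowerSeries.constantCoeff (I 0) = 0)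
    (hI0 : HasSum (fun n : ℕ => (n ! : ℚ)⁻¹ • (MvPowerSeries.X n * I 0 ^ n)) (I 0))
    (hIk : ∀ k : ℕ, 1 ≤ k →
      HasSum (fun p : ℕ => (p ! : ℚ)⁻¹ • (I 0 ^ p * MvPowerSeries.X (p + k))) (I k))
    (k : ℕ) :
    pd k (I 0) = ((k ! : ℚ)⁻¹ • I 0 ^ k) * (1 - I 1)⁻¹ ∧
    ∀ l : ℕ, 1 ≤ l →
      pd k (I l) = ((k ! : ℚ)⁻¹ • I 0 ^ k) * (I (l + 1) * (1 - I 1)⁻¹)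
        + (if l ≤ k then ((k - l)! : ℚ)⁻¹ • I 0 ^ (k - l) else 0) := by
  set J := pd k (I 0) with hJdef
  set Cs := ((k ! : ℚ)⁻¹ • I 0 ^ k) with hCs
  -- constant coefficient of I 1 is 0
  have hI1c : MvPowerSeries.constantCoeff (I 1) = 0 := by
    have h1 := hasSum_coord (hIk 1 le_rfl) 0
    have hz : (fun p : ℕ => coeff 0 ((p ! : ℚ)⁻¹ • (I 0 ^ p * MvPowerSeries.X (p + 1))))
        = fun _ => (0 : ℚ) := by
      funext p
      rw [MvPowerSeries.coeff_smul, MvPowerSeries.coeff_zero_eq_constantCoeff, map_mul,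
        MvPowerSeries.constantCoeff_X, mul_zero, mul_zero]
    rw [hz] at h1
    rw [← MvPowerSeries.coeff_zero_eq_constantCoeff]
    exact h1.unique hasSum_zero
  have hA : MvPowerSeries.constantCoeff (1 - I 1) ≠ 0 := by
    rw [map_sub, map_one, hI1c, sub_zero]
    norm_num
  -- the key equation for J
  have hkey : J = Cs + I 1 * J := by
    have h2 := hasSum_pd k hI0
    set a : ℕ → MvPowerSeries ℕ ℚ := fun n => (n ! : ℚ)⁻¹ • (pd k (MvPowerSeries.X n) * I 0 ^ n)
      with ha
    set b : ℕ → MvPowerSeries ℕ ℚ := fun n => (n ! : ℚ)⁻¹ • (MvPowerSeries.X n * pd k (I 0 ^ n))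
      with hb
    have hterm : (fun n => pd k ((n ! : ℚ)⁻¹ • (MvPowerSeries.X n * I 0 ^ n)))
        = fun n => a n + b n := by
      funext n
      rw [pd_smul, pd_mul, smul_add, ha, hb]
    rw [hterm] at h2
    have hsa : HasSum a Cs := by
      have ha' : a = fun n => if n = k then Cs else 0 := by
        funext n
        by_cases hn : n = k
        · subst hn; rw [ha]; simp only [pd_X_self, one_mul, if_pos rfl, if_true, hCs]
        · rw [ha]; simp only [pd_X_ne hn, zero_mul, smul_zero, if_neg hn]
      rw [ha']
      exact hasSum_ite_eq k Cs
    have hsb : HasSum b (I 1 * J) := by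
      have base := hasSum_mul_right J (hIk 1 le_rfl)
      have hinj : Function.Injective (fun p : ℕ => p + 1) := add_left_injective 1
      have hvan : ∀ x ∉ Set.range (fun p : ℕ => p + 1), b x = 0 := by
        intro x hx
        have hx0 : x = 0 := by
          by_contra hxx
          exact hx ⟨x - 1, by show x - 1 + 1 = x; omega⟩
        subst hx0
        rw [hb]
        simp only [pow_zero, pd_one, mul_zero, smul_zero]
      refine (Function.Injective.hasSum_iff hinj hvan).mp ?_
      have hcomp : (b ∘ fun p => p + 1)
          = fun p => ((p ! : ℚ)⁻¹ • (I 0 ^ p * MvPowerSeries.X (p + 1))) * J := by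
        funext p
        show ((p + 1)! : ℚ)⁻¹ • (MvPowerSeries.X (p + 1) * pd k (I 0 ^ (p + 1))) = _
        rw [pd_pow, mul_smul_comm, smul_smul, fact_inv_succ, smul_mul_assoc]
        congr 1
        ring
      rw [hcomp]
      exact base
    exact h2.unique (hsa.add hsb)
  have hfirst : J = Cs * (1 - I 1)⁻¹ := by
    rw [MvPowerSeries.eq_mul_inv_iff_mul_eq hA]
    linear_combination hkey
  refine ⟨hfirst, ?_⟩
  intro l hl
  have h3 := hasSum_pd k (hIk l hl)
  set c : ℕ → MvPowerSeries ℕ ℚ :=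
    fun p => (p ! : ℚ)⁻¹ • (I 0 ^ p * pd k (MvPowerSeries.X (p + l))) with hc
  set d : ℕ → MvPowerSeries ℕ ℚ :=
    fun p => (p ! : ℚ)⁻¹ • (pd k (I 0 ^ p) * MvPowerSeries.X (p + l)) with hd
  have hterm : (fun p => pd k ((p ! : ℚ)⁻¹ • (I 0 ^ p * MvPowerSeries.X (p + l))))
      = fun p => d p + c p := by
    funext p
    rw [pd_smul, pd_mul, smul_add, hc, hd]
  rw [hterm] at h3
  have hsc : HasSum c (if l ≤ k then ((k - l)! : ℚ)⁻¹ • I 0 ^ (k - l) else 0) := by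
    by_cases hlk : l ≤ k
    · rw [if_pos hlk]
      have hc' : c = fun p => if p = k - l then ((k - l)! : ℚ)⁻¹ • I 0 ^ (k - l) else 0 := by
        funext p
        by_cases hp : p = k - l
        · subst hp
          have hkl : k - l + l = k := by omega
          rw [hc]
          simp only [hkl, pd_X_self, mul_one, if_pos rfl, if_true]
        · have hne : p + l ≠ k := by omega
          rw [hc]
          simp only [pd_X_ne hne, mul_zero, smul_zero, if_neg hp]
      rw [hc']
      exact hasSum_ite_eq _ _
    · rw [if_neg hlk]
      have hc' : c = fun _ => 0 := by
        funext p
        have hne : p + l ≠ k := by omega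
        rw [hc]
        simp only [pd_X_ne hne, mul_zero, smul_zero]
      rw [hc']
      exact hasSum_zero
  have hsd : HasSum d (I (l + 1) * J) := by
    have base := hasSum_mul_right J (hIk (l + 1) (by omega))
    have hinj : Function.Injective (fun p : ℕ => p + 1) := add_left_injective 1
    have hvan : ∀ x ∉ Set.range (fun p : ℕ => p + 1), d x = 0 := by
      intro x hx
      have hx0 : x = 0 := by
        by_contra hxx
        exact hx ⟨x - 1, by show x - 1 + 1 = x; omega⟩
      subst hx0
      rw [hd]
      simp only [pow_zero, pd_one, zero_mul, smul_zero]
    refine (Function.Injective.hasSum_iff hinj hvan).mp ?_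
    have hcomp : (d ∘ fun p => p + 1)
        = fun p => ((p ! : ℚ)⁻¹ • (I 0 ^ p * MvPowerSeries.X (p + (l + 1)))) * J := by
      funext p
      show ((p + 1)! : ℚ)⁻¹ • (pd k (I 0 ^ (p + 1)) * MvPowerSeries.X (p + 1 + l)) = _
      rw [pd_pow, smul_mul_assoc ((p : ℚ) + 1), smul_smul, fact_inv_succ, smul_mul_assoc]
      have hidx : p + 1 + l = p + (l + 1) := by omega
      rw [hidx]
      congr 1
      ring
    rw [hcomp]
    exact base
  have := h3.unique (hsd.add hsc)
  rw [this, hfirst]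
  congr 1
  rw [mul_left_comm]

end
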